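/- The distinct nontrivial Fourier coordinates of the Jukes-Cantor model on an unrooted binary tree T are in bijection with the subforests of T; in particular, the number of distinct 0-1 exponent vectors arising from the monomial parameterization q = ∏_{splits} a^{B|B'}_{Σ_{i∈B} g_i} over states (g₁,...,g_n) ∈ (ℤ₂×ℤ₂)^n with Σg_i = 0 equals the number of subforests of T. -/

import Mathlib

/-- A binary (trivalent) leaf-labelled tree on `n` leaves: an unrooted tree whose
vertex set consists of `n` leaves (of degree 1, labelled by `Fin n`) and `n - 2`
internal vertices (of degree 3). -/
structure BinTree (n : ℕ) where
  G : SimpleGraph (Fin n ⊕ Fin (n - 2))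
  isTree : G.IsTree
  degLeaf : ∀ i : Fin n, (G.neighborSet (Sum.inl i)).ncard = 1
  degInternal : ∀ j : Fin (n - 2), (G.neighborSet (Sum.inr j)).ncard = 3

open scoped Classical

/-- The set of "solid" edges determined by an assignment `g` of elements of
`ℤ₂ × ℤ₂` to the leaves: the edges whose split side sums to a nonidentity
element (the side of an edge at an endpoint `v` consists of the leaves
reachable from `v` after deleting the edge). -/
noncomputable def solidSet {n : ℕ} (T : BinTree n) (g : Fin n → ZMod 2 × ZMod 2) :
    Set (Sym2 (Fin n ⊕ Fin (n - 2))) :=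
  {e | e ∈ T.G.edgeSet ∧ ∃ v, v ∈ e ∧
    (∑ i : Fin n,
      if (T.G.deleteEdges {e}).Reachable v (Sum.inl i) then g i else 0) ≠ 0}

/-- A subforest of the tree: a set of edges forming a disjoint union of
subtrees all of whose degree-one vertices are leaves of the tree, i.e. no
internal vertex of the tree meets exactly one edge of the set. -/
def IsSubforest {n : ℕ} (T : BinTree n) (F : Set (Sym2 (Fin n ⊕ Fin (n - 2)))) : Prop :=
  F ⊆ T.G.edgeSet ∧ ∀ j : Fin (n - 2), {e ∈ F | Sum.inr j ∈ e}.ncard ≠ 1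

/-!
Because the leaf states sum to zero, the two sides of an edge `e` carry the same sum `f e`, and
at an internal vertex the three values of `f` on the incident edges add up to the total, zero.
Hence `f` is never nonzero on exactly one edge at an internal vertex: the solid edges form a
subforest. Conversely, given a subforest `F`, root the tree at a leaf and label the edges from the
root outwards, nonzero exactly on `F`, so that the three labels at every internal vertex sum to
zero; this is possible because, in `ZMod 2 × ZMod 2 ≅ 𝔽₄`, `x + ω x + ω² x = 0`. Putting on each
leaf the label of its edge, the sum over one side of an edge `e` is the label of `e`: every
other edge on that side is counted from both of its endpoints.
-/

open Finset

theorem Set.ncard_ne_one_iff {α : Type*} {s : Set α} : s.ncard ≠ 1 ↔ ∀ a ∈ s, ∃ b ∈ s, b ≠ a := by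
  rw [Ne, Set.ncard_eq_one]
  refine ⟨fun h a ha ↦ by_contra fun hall ↦ h ⟨a, ?_⟩, ?_⟩
  · push Not at hall
    exact Set.eq_singleton_iff_unique_mem.mpr ⟨ha, hall⟩
  · rintro h ⟨a, rfl⟩
    obtain ⟨b, hb, hne⟩ := h a rfl
    exact hne hb

namespace SimpleGraph

variable {V : Type*} {G : SimpleGraph V}

theorem Walk.reachable_deleteEdges_or {a b x y : V} (p : G.Walk x y)
    (hx : (G.deleteEdges {s(a, b)}).Reachable a x ∨ (G.deleteEdges {s(a, b)}).Reachable b x) :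
    (G.deleteEdges {s(a, b)}).Reachable a y ∨ (G.deleteEdges {s(a, b)}).Reachable b y := by
  induction p with
  | nil => exact hx
  | @cons x z y hxz q ih =>
    apply ih
    by_cases he : s(x, z) = s(a, b)
    · rcases Sym2.eq_iff.mp he with ⟨-, rfl⟩ | ⟨-, rfl⟩
      · exact .inr .rfl
      · exact .inl .rfl
    · have hxz' : (G.deleteEdges {s(a, b)}).Adj x z := by simp [hxz, he]
      exact hx.imp (·.trans hxz'.reachable) (·.trans hxz'.reachable)

theorem Preconnected.reachable_deleteEdges_or (hG : G.Preconnected) (a b w : V) :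
    (G.deleteEdges {s(a, b)}).Reachable a w ∨ (G.deleteEdges {s(a, b)}).Reachable b w :=
  (hG a w).elim fun p ↦ p.reachable_deleteEdges_or (.inl .rfl)

theorem IsAcyclic.not_reachable_deleteEdges (hG : G.IsAcyclic) {a b : V} (h : G.Adj a b) :
    ¬(G.deleteEdges {s(a, b)}).Reachable a b :=
  isAcyclic_iff_forall_adj_isBridge.mp hG h

theorem IsTree.existsUnique_adj_reachable_deleteEdges (hG : G.IsTree) {v w : V} (hvw : v ≠ w) :
    ∃! u, G.Adj v u ∧ (G.deleteEdges {s(v, u)}).Reachable u w := by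
  obtain ⟨p, hp, -⟩ := hG.existsUnique_path v w
  cases p with
  | nil => exact absurd rfl hvw
  | @cons _ u _ hvu q =>
    have hvq : v ∉ q.support := (Walk.cons_isPath_iff _ _).mp hp |>.2
    have huw : ∀ u', (G.deleteEdges {s(v, u')}).Reachable u w := fun u' ↦
      ⟨q.toDeleteEdges _ fun e he hev ↦
        hvq (q.fst_mem_support_of_mem_edges (hev ▸ he : s(v, u') ∈ q.edges))⟩
    refine ⟨u, ⟨hvu, huw u⟩, fun u' ⟨hvu', hu'w⟩ ↦ by_contra fun hne ↦ ?_⟩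
    have hvu'' : (G.deleteEdges {s(v, u')}).Adj v u := by
      simp [hvu, Ne.symm hne, hvu.ne.symm]
    exact hG.isAcyclic.not_reachable_deleteEdges hvu'
      ((hvu''.reachable.trans (huw u')).trans hu'w.symm)

theorem exists_neighborFinset_eq_of_degree_eq_three [Fintype V] [DecidableRel G.Adj]
    [DecidableEq V] {v p : V} (hdeg : G.degree v = 3) (hp : G.Adj v p) :
    ∃ w₁ w₂, w₁ ≠ w₂ ∧ w₁ ≠ p ∧ w₂ ≠ p ∧ G.neighborFinset v = {p, w₁, w₂} := by
  have hp' : p ∈ G.neighborFinset v := (G.mem_neighborFinset v p).mpr hp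
  have hcard : ((G.neighborFinset v).erase p).card = 2 := by
    rw [card_erase_of_mem hp', card_neighborFinset_eq_degree, hdeg]
  obtain ⟨w₁, w₂, hne, hw⟩ := card_eq_two.mp hcard
  have hw₁ : w₁ ∈ (G.neighborFinset v).erase p := hw ▸ mem_insert_self _ _
  have hw₂ : w₂ ∈ (G.neighborFinset v).erase p := hw ▸ mem_insert_of_mem (mem_singleton_self _)
  exact ⟨w₁, w₂, hne, ne_of_mem_erase hw₁, ne_of_mem_erase hw₂, by rw [← hw, insert_erase hp']⟩

section IncidenceSum

variable [Fintype V] [DecidableRel G.Adj] {M : Type*} [AddCommGroup M] [Module (ZMod 2) M]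

variable (G) in
def incidenceSum (f : Sym2 V → M) (v : V) : M := ∑ u ∈ G.neighborFinset v, f s(v, u)

-- In characteristic two an edge with both ends in `S` contributes twice, that is, not at all.
theorem sum_sum_neighborFinset_filter_mem_eq_zero (S : Finset V) (f : Sym2 V → M) :
    ∑ v ∈ S, ∑ u ∈ G.neighborFinset v with u ∈ S, f s(v, u) = 0 := by
  rw [sum_sigma']
  refine sum_involution (fun x _ ↦ ⟨x.2, x.1⟩) (fun x _ ↦ ?_) (fun x hx _ ↦ ?_)
    (fun x hx ↦ ?_) (fun _ _ ↦ rfl)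
  · rw [Sym2.eq_swap]
    exact ZModModule.add_self _
  · simp only [mem_sigma, mem_filter, mem_neighborFinset] at hx
    intro h
    exact hx.2.1.ne (congrArg Sigma.fst h).symm
  · simp only [mem_sigma, mem_filter, mem_neighborFinset] at hx ⊢
    exact ⟨hx.2.2, hx.2.1.symm, hx.1⟩

theorem sum_incidenceSum_eq_zero (f : Sym2 V → M) : ∑ v, G.incidenceSum f v = 0 := by
  simpa [incidenceSum] using G.sum_sum_neighborFinset_filter_mem_eq_zero univ f

theorem sum_incidenceSum_eq_of_boundary_eq {S : Finset V} {a b : V} (f : Sym2 V → M)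
    (hab : G.Adj a b) (hb : b ∈ S) (ha : a ∉ S)
    (hS : ∀ v ∈ S, ∀ u, G.Adj v u → u ∉ S → v = b ∧ u = a) :
    ∑ v ∈ S, G.incidenceSum f v = f s(a, b) := by
  simp_rw [incidenceSum, ← sum_filter_add_sum_filter_not (G.neighborFinset _) (· ∈ S),
    sum_add_distrib, G.sum_sum_neighborFinset_filter_mem_eq_zero, zero_add]
  rw [sum_eq_single_of_mem b hb, sum_eq_single_of_mem a, Sym2.eq_swap]
  · simpa using ⟨hab.symm, ha⟩
  · intro u hu hua
    simp only [mem_filter, mem_neighborFinset] at hu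
    exact absurd (hS b hb u hu.1 hu.2).2 hua
  · intro v hv hvb
    refine sum_eq_zero fun u hu ↦ ?_
    simp only [mem_filter, mem_neighborFinset] at hu
    exact absurd (hS v hv u hu.1 hu.2).1 hvb

end IncidenceSum

end SimpleGraph

-- Multiplication by `ω` under the identification `(a, b) ↦ a + b ω` of `ZMod 2 × ZMod 2` with
-- `𝔽₄ = 𝔽₂[ω]`, `ω² = ω + 1`.
def mulOmega (x : ZMod 2 × ZMod 2) : ZMod 2 × ZMod 2 := (x.2, x.1 + x.2)

-- Below an edge labelled `x`, two continuing forest edges get `ω x` and `ω² x`, a single one keeps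
-- `x`, and the two edges of a component starting there (`x = 0`) both get `(1, 0)`; either way the
-- three labels at the vertex sum to zero.
def childLabel (inF sibInF first : Bool) (x : ZMod 2 × ZMod 2) : ZMod 2 × ZMod 2 :=
  if inF then
    if x = 0 then (1, 0)
    else if sibInF then (if first then mulOmega x else mulOmega (mulOmega x)) else x
  else 0

theorem childLabel_ne_zero_iff :
    ∀ (inF sibInF first : Bool) (x : ZMod 2 × ZMod 2),
      childLabel inF sibInF first x ≠ 0 ↔ inF := by
  decide

theorem add_childLabel_add_childLabel :
    ∀ (x : ZMod 2 × ZMod 2) (b₁ b₂ c : Bool), (x ≠ 0 → b₁ ∨ b₂) → (b₁ → x ≠ 0 ∨ b₂) →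
      (b₂ → x ≠ 0 ∨ b₁) → x + childLabel b₁ b₂ c x + childLabel b₂ b₁ (!c) x = 0 := by
  decide

namespace SimpleGraph

variable {V : Type*} {G : SimpleGraph V}

namespace IsTree

variable (hG : G.IsTree) (r : V)

noncomputable def pathToRoot (v : V) : G.Walk v r := (hG.existsUnique_path v r).choose

theorem isPath_pathToRoot (v : V) : (hG.pathToRoot r v).IsPath :=
  (hG.existsUnique_path v r).choose_spec.1

theorem eq_pathToRoot {v : V} {p : G.Walk v r} (hp : p.IsPath) : p = hG.pathToRoot r v :=
  (hG.existsUnique_path v r).choose_spec.2 p hp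

noncomputable def depth (v : V) : ℕ := (hG.pathToRoot r v).length

noncomputable def parent (v : V) : V := (hG.pathToRoot r v).snd

def children (v : V) : Set V := {u | u ≠ r ∧ hG.parent r u = v}

variable {r}

theorem parent_root : hG.parent r r = r := by
  rw [parent, ← hG.eq_pathToRoot r Walk.IsPath.nil]
  rfl

theorem adj_parent {v : V} (hv : v ≠ r) : G.Adj v (hG.parent r v) :=
  Walk.adj_snd (Walk.not_nil_of_ne hv)

theorem depth_parent {v : V} (hv : v ≠ r) : hG.depth r (hG.parent r v) + 1 = hG.depth r v := by
  rw [depth, depth, parent, ← hG.eq_pathToRoot r (hG.isPath_pathToRoot r v).tail]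
  exact Walk.length_tail_add_one (Walk.not_nil_of_ne hv)

theorem eq_parent_or_eq_parent_of_adj {v w : V} (h : G.Adj v w) :
    w = hG.parent r v ∨ v = hG.parent r w := by
  by_cases hw : w ∈ (hG.pathToRoot r v).support
  · exact .inl (hG.isAcyclic.eq_snd_of_adj_start (hG.isPath_pathToRoot r v) h hw)
  · right
    rw [parent, ← hG.eq_pathToRoot r ((hG.isPath_pathToRoot r v).cons hw (h := h.symm))]
    simp

theorem parent_parent_ne {v : V} (hv : v ≠ r) : hG.parent r (hG.parent r v) ≠ v := by
  intro h
  have hpr : hG.parent r v ≠ r := fun hp ↦ hv (by rw [← h, hp, hG.parent_root])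
  have := hG.depth_parent hv
  have := hG.depth_parent hpr
  rw [h] at this
  omega

theorem mem_children_iff {u v : V} :
    u ∈ hG.children r v ↔ G.Adj v u ∧ u ≠ hG.parent r v := by
  change u ≠ r ∧ hG.parent r u = v ↔ _
  constructor
  · rintro ⟨hur, rfl⟩
    exact ⟨(hG.adj_parent hur).symm, fun hu ↦ hG.parent_parent_ne hur hu.symm⟩
  · rintro ⟨hvu, hu⟩
    have hv : v = hG.parent r u := (hG.eq_parent_or_eq_parent_of_adj hvu).resolve_left hu
    refine ⟨fun hur ↦ hvu.ne ?_, hv.symm⟩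
    rw [hv, hur, hG.parent_root]

variable (r) in
theorem exists_eq_parent_of_adj {a b : V} (h : G.Adj a b) :
    ∃ v ≠ r, s(a, b) = s(hG.parent r v, v) := by
  rcases hG.eq_parent_or_eq_parent_of_adj (r := r) h with rfl | rfl
  · refine ⟨a, fun har ↦ h.ne ?_, Sym2.eq_swap⟩
    rw [har, hG.parent_root]
  · refine ⟨b, fun hbr ↦ h.ne ?_, rfl⟩
    rw [hbr, hG.parent_root]

theorem exists_children_eq_pair [Fintype V] [DecidableRel G.Adj] [DecidableEq V] {v : V}
    (hv : v ≠ r) (hdeg : G.degree v = 3) :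
    ∃ w₁ w₂, w₁ ≠ w₂ ∧ G.neighborFinset v = {hG.parent r v, w₁, w₂} ∧
      hG.children r v = {w₁, w₂} := by
  obtain ⟨w₁, w₂, h₁₂, h₁p, h₂p, hN⟩ :=
    G.exists_neighborFinset_eq_of_degree_eq_three hdeg (hG.adj_parent hv)
  refine ⟨w₁, w₂, h₁₂, hN, Set.ext fun u ↦ ?_⟩
  rw [mem_children_iff, ← mem_neighborFinset, hN]
  constructor
  · rintro ⟨hu, hup⟩
    simpa [hup] using hu
  · rintro (rfl | rfl) <;> simp [h₁p, h₂p]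

variable [LinearOrder V] (F : Set (Sym2 V))

-- The label of the edge from `v` to its parent; the order on `V` only decides which of two
-- sibling edges is `first`.
variable (r) in
noncomputable def vertexLabel (v : V) : ZMod 2 × ZMod 2 :=
  if hv : v = r then 0 else
    have := hG.depth_parent hv -- for `termination_by`
    childLabel (decide (s(hG.parent r v, v) ∈ F))
      (decide (∃ u ∈ hG.children r (hG.parent r v), u ≠ v ∧ s(hG.parent r v, u) ∈ F))
      (decide (∀ u ∈ hG.children r (hG.parent r v), v ≤ u))
      (vertexLabel (hG.parent r v))
termination_by hG.depth r v

theorem vertexLabel_of_ne {v : V} (hv : v ≠ r) :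
    hG.vertexLabel r F v =
      childLabel (decide (s(hG.parent r v, v) ∈ F))
        (decide (∃ u ∈ hG.children r (hG.parent r v), u ≠ v ∧ s(hG.parent r v, u) ∈ F))
        (decide (∀ u ∈ hG.children r (hG.parent r v), v ≤ u))
        (hG.vertexLabel r F (hG.parent r v)) := by
  rw [vertexLabel, dif_neg hv]

theorem vertexLabel_ne_zero_iff {v : V} (hv : v ≠ r) :
    hG.vertexLabel r F v ≠ 0 ↔ s(hG.parent r v, v) ∈ F := by
  rw [hG.vertexLabel_of_ne F hv, childLabel_ne_zero_iff, decide_eq_true_iff]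

variable (r) in
noncomputable def edgeLabel : Sym2 V → ZMod 2 × ZMod 2 :=
  Sym2.lift ⟨fun a b ↦
    if hG.depth r a < hG.depth r b then hG.vertexLabel r F b
    else if hG.depth r b < hG.depth r a then hG.vertexLabel r F a else 0, fun a b ↦ by
    dsimp only
    split_ifs <;> first | rfl | omega⟩

theorem edgeLabel_parent {v : V} (hv : v ≠ r) :
    hG.edgeLabel r F s(hG.parent r v, v) = hG.vertexLabel r F v := by
  simp [edgeLabel, ← hG.depth_parent hv]

theorem edgeLabel_ne_zero_iff {e : Sym2 V} (he : e ∈ G.edgeSet) :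
    hG.edgeLabel r F e ≠ 0 ↔ e ∈ F := by
  induction e with
  | _ a b =>
    obtain ⟨v, hv, hab⟩ := hG.exists_eq_parent_of_adj r he
    rw [hab, hG.edgeLabel_parent F hv, hG.vertexLabel_ne_zero_iff F hv]

theorem edgeLabel_of_mem_children {v w : V} (hw : w ∈ hG.children r v) :
    hG.edgeLabel r F s(v, w) = hG.vertexLabel r F w :=
  hw.2 ▸ hG.edgeLabel_parent F hw.1

theorem vertexLabel_of_children_eq_pair {v w₁ w₂ : V} (hch : hG.children r v = {w₁, w₂})
    (h₁₂ : w₁ ≠ w₂) :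
    hG.vertexLabel r F w₁ = childLabel (decide (s(v, w₁) ∈ F)) (decide (s(v, w₂) ∈ F))
      (decide (w₁ ≤ w₂)) (hG.vertexLabel r F v) := by
  obtain ⟨hw₁r, hw₁v⟩ : w₁ ∈ hG.children r v := hch ▸ Set.mem_insert _ _
  rw [hG.vertexLabel_of_ne F hw₁r, hw₁v, hch]
  simp [h₁₂.symm]

theorem incidenceSum_edgeLabel_eq_zero [Fintype V] [DecidableRel G.Adj] {v : V}
    (hv : v ≠ r) (hdeg : G.degree v = 3)
    (hF : ∀ u, G.Adj v u → s(v, u) ∈ F → ∃ u', G.Adj v u' ∧ u' ≠ u ∧ s(v, u') ∈ F) :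
    G.incidenceSum (hG.edgeLabel r F) v = 0 := by
  obtain ⟨w₁, w₂, h₁₂, hN, hch⟩ := hG.exists_children_eq_pair hv hdeg
  have hw₁ : w₁ ∈ hG.children r v := hch ▸ Set.mem_insert _ _
  have hw₂ : w₂ ∈ hG.children r v := hch ▸ Set.mem_insert_of_mem _ rfl
  have hp : hG.parent r v ∉ ({w₁, w₂} : Finset V) := by
    simp only [mem_insert, mem_singleton, not_or]
    exact ⟨(hG.mem_children_iff.mp hw₁).2.symm, (hG.mem_children_iff.mp hw₂).2.symm⟩
  rw [incidenceSum, hN, sum_insert hp, sum_pair h₁₂, ← add_assoc, Sym2.eq_swap,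
    hG.edgeLabel_parent F hv, hG.edgeLabel_of_mem_children F hw₁, hG.edgeLabel_of_mem_children F hw₂,
    hG.vertexLabel_of_children_eq_pair F hch h₁₂,
    hG.vertexLabel_of_children_eq_pair F (Set.pair_comm w₁ w₂ ▸ hch) h₁₂.symm]
  have hfirst : decide (w₂ ≤ w₁) = !decide (w₁ ≤ w₂) := by
    rcases h₁₂.lt_or_gt with h | h <;> simp [h.le, not_le.mpr h]
  rw [hfirst]
  have hadj : ∀ u, G.Adj v u ↔ u = hG.parent r v ∨ u = w₁ ∨ u = w₂ := fun u ↦ by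
    rw [← mem_neighborFinset, hN]; simp
  simp only [hadj, forall_eq_or_imp, forall_eq, exists_eq_or_imp, exists_eq_left] at hF
  apply add_childLabel_add_childLabel <;>
    simp only [hG.vertexLabel_ne_zero_iff F hv, Sym2.eq_swap, decide_eq_true_iff] <;> tauto

end IsTree

end SimpleGraph

namespace BinTree

open SimpleGraph

variable {n : ℕ}

theorem nonempty_fin (T : BinTree n) : Nonempty (Fin n) := by
  obtain ⟨v⟩ := T.isTree.connected.nonempty
  rcases v with i | j
  · exact ⟨i⟩
  · exact ⟨⟨0, by have := j.2; omega⟩⟩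

variable (T : BinTree n)

theorem degree_inr (j : Fin (n - 2)) : T.G.degree (.inr j) = 3 := by
  rw [← card_neighborFinset_eq_degree, neighborFinset_def, ← Set.ncard_eq_toFinset_card',
    T.degInternal j]

variable {M : Type*} [AddCommGroup M]

noncomputable def sideSum (g : Fin n → M) (e : Sym2 (Fin n ⊕ Fin (n - 2)))
    (v : Fin n ⊕ Fin (n - 2)) : M :=
  ∑ i, if (T.G.deleteEdges {e}).Reachable v (.inl i) then g i else 0

theorem sideSum_add_sideSum {a b : Fin n ⊕ Fin (n - 2)} (h : T.G.Adj a b) (g : Fin n → M) :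
    T.sideSum g s(a, b) a + T.sideSum g s(a, b) b = ∑ i, g i := by
  rw [sideSum, sideSum, ← sum_add_distrib]
  refine sum_congr rfl fun i _ ↦ ?_
  have hboth : ¬((T.G.deleteEdges {s(a, b)}).Reachable a (.inl i) ∧
      (T.G.deleteEdges {s(a, b)}).Reachable b (.inl i)) := fun ⟨ha, hb⟩ ↦
    T.isTree.isAcyclic.not_reachable_deleteEdges h (ha.trans hb.symm)
  rcases T.isTree.connected.preconnected.reachable_deleteEdges_or a b (.inl i) with hr | hr <;>
    simp_all

theorem sum_sideSum_neighborFinset (j : Fin (n - 2)) (g : Fin n → M) :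
    ∑ u ∈ T.G.neighborFinset (.inr j), T.sideSum g s(.inr j, u) u = ∑ i, g i := by
  simp only [sideSum]
  rw [sum_comm]
  refine sum_congr rfl fun i _ ↦ ?_
  obtain ⟨u, ⟨hu, hr⟩, huniq⟩ :=
    T.isTree.existsUnique_adj_reachable_deleteEdges (v := .inr j) (w := .inl i) (by simp)
  rw [sum_eq_single_of_mem u ((mem_neighborFinset _ _ _).mpr hu), if_pos hr]
  intro u' hu' hne
  exact if_neg fun hr' ↦ hne (huniq u' ⟨(mem_neighborFinset _ _ _).mp hu', hr'⟩)

theorem sideSum_eq_of_sum_eq_zero [Module (ZMod 2) M] {a b : Fin n ⊕ Fin (n - 2)}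
    (h : T.G.Adj a b) {g : Fin n → M} (hg : ∑ i, g i = 0) :
    T.sideSum g s(a, b) a = T.sideSum g s(a, b) b := by
  have := T.sideSum_add_sideSum h g
  rwa [hg, add_eq_zero_iff_eq_neg, ZModModule.neg_eq_self] at this

theorem mem_solidSet_iff {a b : Fin n ⊕ Fin (n - 2)} (h : T.G.Adj a b)
    {g : Fin n → ZMod 2 × ZMod 2} (hg : ∑ i, g i = 0) :
    s(a, b) ∈ solidSet T g ↔ T.sideSum g s(a, b) b ≠ 0 := by
  simp only [solidSet, Set.mem_ofPred_eq, mem_edgeSet, Sym2.mem_iff, exists_eq_or_imp,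
    exists_eq_left]
  change _ ∧ (T.sideSum g s(a, b) a ≠ 0 ∨ T.sideSum g s(a, b) b ≠ 0) ↔ _
  simp [h, T.sideSum_eq_of_sum_eq_zero h hg]

theorem isSubforest_iff {F : Set (Sym2 (Fin n ⊕ Fin (n - 2)))} :
    IsSubforest T F ↔ F ⊆ T.G.edgeSet ∧ ∀ j u, T.G.Adj (.inr j) u → s(.inr j, u) ∈ F →
      ∃ u', T.G.Adj (.inr j) u' ∧ u' ≠ u ∧ s(.inr j, u') ∈ F := by
  refine and_congr_right fun hFE ↦ forall_congr' fun j ↦ ?_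
  rw [Set.ncard_ne_one_iff]
  constructor
  · intro h u _ huF
    obtain ⟨e', ⟨he'F, hje'⟩, hne⟩ := h _ ⟨huF, Sym2.mem_mk_left _ _⟩
    obtain ⟨u', rfl⟩ := Sym2.mem_iff_exists.mp hje'
    exact ⟨u', hFE he'F, fun h ↦ hne (h ▸ rfl), he'F⟩
  · rintro h e ⟨heF, hje⟩
    obtain ⟨u, rfl⟩ := Sym2.mem_iff_exists.mp hje
    obtain ⟨u', -, hne, hu'F⟩ := h u (hFE heF) heF
    exact ⟨s(.inr j, u'), ⟨hu'F, Sym2.mem_mk_left _ _⟩, fun h ↦ hne (Sym2.congr_right.mp h)⟩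

theorem isSubforest_solidSet {g : Fin n → ZMod 2 × ZMod 2} (hg : ∑ i, g i = 0) :
    IsSubforest T (solidSet T g) := by
  refine T.isSubforest_iff.mpr ⟨fun e he ↦ he.1, fun j u₀ hu₀ hsolid ↦ by_contra fun hne ↦ ?_⟩
  push Not at hne
  have hsum := T.sum_sideSum_neighborFinset j g
  rw [sum_eq_single_of_mem u₀ ((mem_neighborFinset _ _ _).mpr hu₀), hg] at hsum
  · exact (T.mem_solidSet_iff hu₀ hg).mp hsolid hsum
  · intro u hu hne'
    by_contra hu'
    exact hne u ((mem_neighborFinset _ _ _).mp hu) hne'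
      ((T.mem_solidSet_iff ((mem_neighborFinset _ _ _).mp hu) hg).mpr hu')

theorem sum_incidenceSum_inl_eq_zero [Module (ZMod 2) M] {f : Sym2 (Fin n ⊕ Fin (n - 2)) → M}
    (hf : ∀ j, T.G.incidenceSum f (.inr j) = 0) : ∑ i, T.G.incidenceSum f (.inl i) = 0 := by
  have := T.G.sum_incidenceSum_eq_zero f
  rwa [Fintype.sum_sum_type, sum_congr rfl fun j _ ↦ hf j, sum_const_zero, add_zero] at this

theorem sideSum_incidenceSum_inl [Module (ZMod 2) M] {f : Sym2 (Fin n ⊕ Fin (n - 2)) → M}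
    (hf : ∀ j, T.G.incidenceSum f (.inr j) = 0) {a b : Fin n ⊕ Fin (n - 2)} (h : T.G.Adj a b) :
    T.sideSum (fun i ↦ T.G.incidenceSum f (.inl i)) s(a, b) b = f s(a, b) := by
  let R := (T.G.deleteEdges {s(a, b)}).Reachable b
  have hba : ¬R a := fun hr ↦ T.isTree.isAcyclic.not_reachable_deleteEdges h hr.symm
  have hboundary : ∀ v ∈ univ.filter R, ∀ u, T.G.Adj v u → u ∉ univ.filter R → v = b ∧ u = a := by
    intro v hv u hvu hu
    simp only [mem_filter, mem_univ, true_and] at hv hu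
    by_contra hne
    refine hu (hv.trans (SimpleGraph.Adj.reachable ?_))
    refine deleteEdges_adj.mpr ⟨hvu, fun he ↦ ?_⟩
    rcases Sym2.eq_iff.mp he with ⟨rfl, rfl⟩ | ⟨rfl, rfl⟩
    · exact hba hv
    · exact hne ⟨rfl, rfl⟩
  rw [← T.G.sum_incidenceSum_eq_of_boundary_eq f h (by simp [R]) (by simpa using hba)
    hboundary, sum_filter, Fintype.sum_sum_type]
  simp [hf, sideSum]

theorem solidSet_incidenceSum_inl {F : Set (Sym2 (Fin n ⊕ Fin (n - 2)))}
    {f : Sym2 (Fin n ⊕ Fin (n - 2)) → ZMod 2 × ZMod 2} (hFE : F ⊆ T.G.edgeSet)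
    (hfF : ∀ e ∈ T.G.edgeSet, f e ≠ 0 ↔ e ∈ F) (hf : ∀ j, T.G.incidenceSum f (.inr j) = 0) :
    solidSet T (fun i ↦ T.G.incidenceSum f (.inl i)) = F := by
  ext e
  by_cases he : e ∈ T.G.edgeSet
  · induction e with
    | _ a b =>
      rw [T.mem_solidSet_iff he (T.sum_incidenceSum_inl_eq_zero hf),
        T.sideSum_incidenceSum_inl hf he, hfF _ he]
  · exact iff_of_false (fun h ↦ he h.1) (fun h ↦ he (hFE h))

theorem exists_label_of_isSubforest {F : Set (Sym2 (Fin n ⊕ Fin (n - 2)))}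
    (hF : IsSubforest T F) :
    ∃ f : Sym2 (Fin n ⊕ Fin (n - 2)) → ZMod 2 × ZMod 2, (∀ e ∈ T.G.edgeSet, f e ≠ 0 ↔ e ∈ F) ∧
      ∀ j, T.G.incidenceSum f (.inr j) = 0 := by
  let : LinearOrder (Fin n ⊕ Fin (n - 2)) := LinearOrder.lift' toLex toLex.injective
  obtain ⟨i₀⟩ := T.nonempty_fin
  exact ⟨T.isTree.edgeLabel (.inl i₀) F, fun e he ↦ T.isTree.edgeLabel_ne_zero_iff F he,
    fun j ↦ T.isTree.incidenceSum_edgeLabel_eq_zero F (by simp) (T.degree_inr j)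
      ((T.isSubforest_iff.mp hF).2 j)⟩

end BinTree

theorem fourier_coordinates_subforests_general (n : ℕ) (T : BinTree n) :
    {F | ∃ g : Fin n → ZMod 2 × ZMod 2, (∑ i : Fin n, g i) = 0 ∧ F = solidSet T g}
      = {F | IsSubforest T F} ∧
    {F | ∃ g : Fin n → ZMod 2 × ZMod 2, (∑ i : Fin n, g i) = 0 ∧ F = solidSet T g}.ncard
      = {F | IsSubforest T F}.ncard := by
  have hsets : {F | ∃ g : Fin n → ZMod 2 × ZMod 2, (∑ i : Fin n, g i) = 0 ∧ F = solidSet T g}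
      = {F | IsSubforest T F} := by
    ext F
    refine ⟨?_, fun hF ↦ ?_⟩
    · rintro ⟨g, hg, rfl⟩
      exact T.isSubforest_solidSet hg
    · obtain ⟨f, hfF, hf⟩ := T.exists_label_of_isSubforest hF
      exact ⟨_, T.sum_incidenceSum_inl_eq_zero hf, (T.solidSet_incidenceSum_inl hF.1 hfF hf).symm⟩
  exact ⟨hsets, by rw [hsets]⟩

/-- The distinct nontrivial Fourier coordinates of the Jukes-Cantor model on a
binary tree `T` are in bijection with the subforests of `T`: the 0-1 exponent
vectors (encoded by their sets of solid edges) arising from leaf states in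
`ℤ₂ × ℤ₂` summing to the identity are exactly the subforests of `T`; in
particular their number equals the number of subforests. -/
theorem fourier_coordinates_subforests (n : ℕ) (hn : 3 ≤ n) (T : BinTree n) :
    {F | ∃ g : Fin n → ZMod 2 × ZMod 2, (∑ i : Fin n, g i) = 0 ∧ F = solidSet T g}
      = {F | IsSubforest T F} ∧
    {F | ∃ g : Fin n → ZMod 2 × ZMod 2, (∑ i : Fin n, g i) = 0 ∧ F = solidSet T g}.ncard
      = {F | IsSubforest T F}.ncard :=
  fourier_coordinates_subforests_general n T
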